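/- Uhlmann's theorem: for density operators ρ on A and σ on A, and any purification |ψ⟩ ∈ A⊗R of ρ (with R of dimension at least that of A), there exists a purification |φ⟩ ∈ A⊗R of σ with |⟨ψ|φ⟩| = F(ρ,σ). -/

import Mathlib

open Matrix Complex ComplexConjugate
open scoped BigOperators Kronecker ComplexOrder Classical

noncomputable section

namespace QIT

variable {n m α β : Type*}

/-- The matrix square root `Matrix.PosSemidef.sqrt` of the older Mathlib (removed since),
restored verbatim with its old definition. -/
noncomputable def _root_.Matrix.PosSemidef.sqrt {𝕜 : Type*} [RCLike 𝕜] [Fintype n] [DecidableEq n]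
    {A : Matrix n n 𝕜} (hA : A.PosSemidef) : Matrix n n 𝕜 :=
  (hA.1.eigenvectorUnitary : Matrix n n 𝕜) * diagonal ((↑) ∘ Real.sqrt ∘ hA.1.eigenvalues) *
    (star (hA.1.eigenvectorUnitary : Matrix n n 𝕜))

lemma _root_.Matrix.PosSemidef.sqrt_conjTranspose {𝕜 : Type*} [RCLike 𝕜] [Fintype n]
    [DecidableEq n] {A : Matrix n n 𝕜} (hA : A.PosSemidef) : hA.sqrtᴴ = hA.sqrt := by
  simp [Matrix.PosSemidef.sqrt, Matrix.conjTranspose_mul, Matrix.diagonal_conjTranspose,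
    Matrix.mul_assoc, Matrix.star_eq_conjTranspose, Function.comp_def, Pi.star_def,
    RCLike.star_def]

/-- The trace norm `‖X‖₁ = Tr √(X Xᴴ)`. -/
noncomputable def traceNorm [Fintype n] [DecidableEq n] (X : Matrix n n ℂ) : ℝ :=
  ((Matrix.posSemidef_self_mul_conjTranspose X).sqrt.trace).re

lemma fid_aux [Fintype n] [DecidableEq n] {ρ σ : Matrix n n ℂ}
    (hρ : ρ.PosSemidef) (hσ : σ.PosSemidef) :
    (hρ.sqrt * σ * hρ.sqrt).PosSemidef := by
  have h := hσ.mul_mul_conjTranspose_same hρ.sqrt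
  rwa [hρ.sqrt_conjTranspose] at h

/-- Fidelity `F(ρ,σ) = Tr √(√ρ σ √ρ)` (defined to be `0` on non-states). -/
noncomputable def fidelity [Fintype n] [DecidableEq n] (ρ σ : Matrix n n ℂ) : ℝ :=
  if h : ρ.PosSemidef ∧ σ.PosSemidef then ((fid_aux h.1 h.2).sqrt.trace).re else 0

/-- Density operators: positive semidefinite with unit trace. -/
def IsDensity [Fintype n] (ρ : Matrix n n ℂ) : Prop := ρ.PosSemidef ∧ ρ.trace = 1

/-- Partial trace over the second tensor factor. -/
def ptraceSnd [Fintype β] (X : Matrix (α × β) (α × β) ℂ) : Matrix α α ℂ :=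
  Matrix.of fun i j => ∑ k : β, X (i, k) (j, k)

/-- Partial trace over the first tensor factor. -/
def ptraceFst [Fintype α] (X : Matrix (α × β) (α × β) ℂ) : Matrix β β ℂ :=
  Matrix.of fun k l => ∑ i : α, X (i, k) (i, l)

/-- `(id ⊗ Φ) X` : apply `Φ` to the second tensor factor. -/
def idTensor (Φ : Matrix n n ℂ → Matrix m m ℂ) (X : Matrix (α × n) (α × n) ℂ) :
    Matrix (α × m) (α × m) ℂ :=
  Matrix.of fun p q => Φ (Matrix.of fun i j => X (p.1, i) (q.1, j)) p.2 q.2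

/-- `(Φ ⊗ id) X` : apply `Φ` to the first tensor factor. -/
def tensorId (Φ : Matrix n n ℂ → Matrix m m ℂ) (X : Matrix (n × β) (n × β) ℂ) :
    Matrix (m × β) (m × β) ℂ :=
  Matrix.of fun p q => Φ (Matrix.of fun i j => X (i, p.2) (j, q.2)) p.1 q.1

/-- Complete positivity: `id_k ⊗ Φ` preserves positive semidefiniteness for all `k`. -/
def IsCompletelyPositive [Fintype n] [Fintype m]
    (Φ : Matrix n n ℂ → Matrix m m ℂ) : Prop :=
  ∀ (k : ℕ) (X : Matrix (Fin k × n) (Fin k × n) ℂ),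
    X.PosSemidef → (idTensor Φ X).PosSemidef

/-- A quantum channel: linear, completely positive and trace preserving. -/
def IsChannel [Fintype n] [Fintype m] (Φ : Matrix n n ℂ → Matrix m m ℂ) : Prop :=
  (∀ X Y, Φ (X + Y) = Φ X + Φ Y) ∧ (∀ (c : ℂ) X, Φ (c • X) = c • Φ X) ∧
    IsCompletelyPositive Φ ∧ ∀ X, (Φ X).trace = X.trace

/-- Von Neumann entropy (base-2), via eigenvalues; `0` on non-Hermitian matrices. -/
noncomputable def entropy [Fintype n] [DecidableEq n] (ρ : Matrix n n ℂ) : ℝ :=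
  if h : ρ.IsHermitian then -∑ i, h.eigenvalues i * Real.logb 2 (h.eigenvalues i) else 0

/-- Quantum mutual information `I(A:B) = S(A) + S(B) - S(AB)`. -/
noncomputable def mutualInfo [Fintype α] [Fintype β] [DecidableEq α] [DecidableEq β]
    (ρ : Matrix (α × β) (α × β) ℂ) : ℝ :=
  entropy (ptraceSnd ρ) + entropy (ptraceFst ρ) - entropy ρ

/-- Coherent information `I(A⟩B) = S(B) - S(AB)`. -/
noncomputable def cohInfo [Fintype α] [Fintype β] [DecidableEq α] [DecidableEq β]
    (ρ : Matrix (α × β) (α × β) ℂ) : ℝ :=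
  entropy (ptraceFst ρ) - entropy ρ

/-- Shannon entropy (base 2). -/
noncomputable def shannonH [Fintype n] (p : n → ℝ) : ℝ :=
  -∑ x, p x * Real.logb 2 (p x)

end QIT

open QIT

section
open scoped MatrixOrder

lemma _root_.Matrix.PosSemidef.sqrt_eq_cfc' {n : Type*} [Fintype n] [DecidableEq n]
    {A : Matrix n n ℂ} (hA : A.PosSemidef) : hA.sqrt = CFC.sqrt A := by
  rw [CFC.sqrt_eq_cfc, cfc_nnreal_eq_real _ A hA.nonneg, hA.1.cfc_eq]
  simp only [Matrix.IsHermitian.cfc, Matrix.PosSemidef.sqrt, Unitary.conjStarAlgAut_apply]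
  congr 3
  funext i
  simp [Real.coe_sqrt, Real.coe_toNNReal', max_eq_left (hA.eigenvalues_nonneg i)]

lemma _root_.Matrix.PosSemidef.posSemidef_sqrt {n : Type*} [Fintype n] [DecidableEq n]
    {A : Matrix n n ℂ} (hA : A.PosSemidef) : hA.sqrt.PosSemidef := by
  rw [hA.sqrt_eq_cfc']
  exact Matrix.nonneg_iff_posSemidef.mp (CFC.sqrt_nonneg A)

lemma _root_.Matrix.PosSemidef.sq_sqrt {n : Type*} [Fintype n] [DecidableEq n]
    {A : Matrix n n ℂ} (hA : A.PosSemidef) : hA.sqrt ^ 2 = A := by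
  rw [hA.sqrt_eq_cfc']
  exact CFC.sq_sqrt A hA.nonneg

lemma _root_.Matrix.PosSemidef.sqrt_mul_self {n : Type*} [Fintype n] [DecidableEq n]
    {A : Matrix n n ℂ} (hA : A.PosSemidef) : hA.sqrt * hA.sqrt = A := by
  rw [hA.sqrt_eq_cfc']
  exact CFC.sqrt_mul_sqrt_self A hA.nonneg

lemma _root_.Matrix.PosSemidef.eq_sqrt_of_sq_eq {n : Type*} [Fintype n] [DecidableEq n]
    {B A : Matrix n n ℂ} (hB : B.PosSemidef) (hA : A.PosSemidef) (h : B ^ 2 = A) :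
    B = hA.sqrt := by
  rw [hA.sqrt_eq_cfc']
  exact (CFC.sqrt_unique (by rw [← sq]; exact h) hB.nonneg).symm

end

lemma polar_coisometry {a r : ℕ} (har : a ≤ r) (M : Matrix (Fin a) (Fin r) ℂ) :
    ∃ U : Matrix (Fin a) (Fin r) ℂ,
      U * Uᴴ = 1 ∧ M = (Matrix.posSemidef_self_mul_conjTranspose M).sqrt * U := by
  classical
  set hP := Matrix.posSemidef_self_mul_conjTranspose M with hPdef
  have hH : (M * Mᴴ).IsHermitian := hP.1
  set A : Matrix (Fin a) (Fin a) ℂ := (hH.eigenvectorUnitary : Matrix (Fin a) (Fin a) ℂ) with hAdef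
  set lam : Fin a → ℝ := hH.eigenvalues with hlamdef
  have hlam0 : ∀ i, 0 ≤ lam i := fun i => hP.eigenvalues_nonneg i
  have hAmem := hH.eigenvectorUnitary.2
  rw [Matrix.mem_unitaryGroup_iff] at hAmem
  have hAA' : A * Aᴴ = 1 := by rw [← Matrix.star_eq_conjTranspose]; exact hAmem
  have hA'A : Aᴴ * A = 1 := by
    rw [← Matrix.star_eq_conjTranspose]; exact mul_eq_one_comm.mp hAmem
  set C : Matrix (Fin a) (Fin r) ℂ := Aᴴ * M with hCdef
  have hspec : M * Mᴴ = A * Matrix.diagonal (fun i => (lam i : ℂ)) * Aᴴ := by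
    have := hH.spectral_theorem
    exact this
  have hCC : C * Cᴴ = Matrix.diagonal (fun i => (lam i : ℂ)) := by
    rw [hCdef, Matrix.conjTranspose_mul, Matrix.conjTranspose_conjTranspose]
    calc Aᴴ * M * (Mᴴ * A) = Aᴴ * (M * Mᴴ) * A := by simp only [Matrix.mul_assoc]
    _ = Aᴴ * (A * Matrix.diagonal (fun i => (lam i : ℂ)) * Aᴴ) * A := by rw [hspec]
    _ = (Aᴴ * A) * Matrix.diagonal (fun i => (lam i : ℂ)) * (Aᴴ * A) := by
        simp only [Matrix.mul_assoc]
    _ = Matrix.diagonal (fun i => (lam i : ℂ)) := by rw [hA'A]; simp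
  -- rows with zero eigenvalue vanish
  have hrow : ∀ i, lam i = 0 → ∀ k, C i k = 0 := by
    intro i hi k
    have hdiag : (C * Cᴴ) i i = 0 := by rw [hCC]; simp [hi]
    have hsum : ∑ k, Complex.normSq (C i k) = 0 := by
      have : (C * Cᴴ) i i = ∑ k, (Complex.normSq (C i k) : ℂ) := by
        simp [Matrix.mul_apply, Matrix.conjTranspose_apply, Complex.mul_conj]
      rw [this] at hdiag
      exact_mod_cast hdiag
    have := (Finset.sum_eq_zero_iff_of_nonneg (fun k _ => Complex.normSq_nonneg (C i k))).mp
      hsum k (Finset.mem_univ k)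
    exact Complex.normSq_eq_zero.mp this
  -- the normalized rows
  set w : Fin a → EuclideanSpace ℂ (Fin r) :=
    fun i => WithLp.toLp 2 (fun k => ((Real.sqrt (lam i) : ℂ))⁻¹ * C i k) with hwdef
  set v : Fin r → EuclideanSpace ℂ (Fin r) :=
    fun j => if h : (j : ℕ) < a then w ⟨j, h⟩ else 0 with hvdef
  set s : Set (Fin r) := {j | ∃ h : (j : ℕ) < a, lam ⟨j, h⟩ ≠ 0} with hsdef
  have hinner : ∀ (i i' : Fin a), (inner ℂ (w i) (w i') : ℂ) =
      (((Real.sqrt (lam i) : ℂ)))⁻¹ * ((Real.sqrt (lam i') : ℂ))⁻¹ *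
        (if i' = i then (lam i : ℂ) else 0) := by
    intro i i'
    rw [PiLp.inner_apply]
    have : ∀ k, (starRingEnd ℂ) (w i k) * (w i' k) =
        ((Real.sqrt (lam i) : ℂ))⁻¹ * ((Real.sqrt (lam i') : ℂ))⁻¹ *
          ((starRingEnd ℂ) (C i k) * C i' k) := by
      intro k
      simp only [hwdef, PiLp.toLp_apply, _root_.map_mul, map_inv₀, Complex.conj_ofReal]
      ring
    simp only [RCLike.inner_apply']
    rw [Finset.sum_congr rfl (fun k _ => this k), ← Finset.mul_sum]
    congr 1
    have : ∑ k, (starRingEnd ℂ) (C i k) * C i' k = (C * Cᴴ) i' i := by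
      simp [Matrix.mul_apply, Matrix.conjTranspose_apply, mul_comm]
    rw [this, hCC, Matrix.diagonal_apply]
    rcases eq_or_ne i' i with h | h <;> simp [h]
  have hortho : Orthonormal ℂ (s.restrict v) := by
    rw [orthonormal_iff_ite]
    rintro ⟨j, hj, hjne⟩ ⟨j', hj', hjne'⟩
    have hvj : v j = w ⟨j, hj⟩ := by rw [hvdef]; exact dif_pos hj
    have hvj' : v j' = w ⟨j', hj'⟩ := by rw [hvdef]; exact dif_pos hj'
    show inner ℂ (v j) (v j') = _
    simp only [hvj, hvj', hinner]
    by_cases h : j = j'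
    · subst h
      simp only [Subtype.mk.injEq, if_true]
      have hs : Real.sqrt (lam ⟨j, hj⟩) ≠ 0 := by
        rw [Real.sqrt_ne_zero (hlam0 _)]; exact hjne
      have hsC : ((Real.sqrt (lam ⟨j, hj⟩) : ℂ)) ≠ 0 := by exact_mod_cast hs
      field_simp
      rw [← Complex.ofReal_pow, Real.sq_sqrt (hlam0 _)]
    · have h1 : (⟨(j' : ℕ), hj'⟩ : Fin a) ≠ ⟨(j : ℕ), hj⟩ := by
        simp only [ne_eq, Fin.mk.injEq]
        exact fun hc => h (Fin.ext hc.symm)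
      rw [if_neg h1, if_neg (by simp only [ne_eq, Subtype.mk.injEq]; exact h)]
      simp
  obtain ⟨b, hb⟩ := hortho.exists_orthonormalBasis_extension_of_card_eq
    (by simp [finrank_euclideanSpace])
  set e : Fin a → Fin r := fun i => ⟨i, lt_of_lt_of_le i.isLt har⟩ with hedef
  have he : Function.Injective e := by
    intro i i' h; rwa [hedef, Fin.mk.injEq, ← Fin.ext_iff] at h
  set Ut : Matrix (Fin a) (Fin r) ℂ := Matrix.of fun i k => b (e i) k with hUtdef
  have hUtUt : Ut * Utᴴ = 1 := by
    ext i i'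
    have := (orthonormal_iff_ite.mp b.orthonormal) (e i') (e i)
    rw [PiLp.inner_apply] at this
    simp only [RCLike.inner_apply'] at this
    simp only [hUtdef, Matrix.mul_apply, Matrix.conjTranspose_apply, Matrix.of_apply,
      Matrix.one_apply]
    calc ∑ k, b (e i) k * (starRingEnd ℂ) (b (e i') k)
        = ∑ k, (starRingEnd ℂ) (b (e i') k) * b (e i) k := by
          exact Finset.sum_congr rfl fun k _ => mul_comm _ _
      _ = if e i' = e i then 1 else 0 := this
      _ = if i = i' then 1 else 0 := by
          rcases eq_or_ne i i' with h | h
          · simp [h]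
          · rw [if_neg (fun hc => h (he hc).symm), if_neg h]
  set D : Matrix (Fin a) (Fin a) ℂ := Matrix.diagonal (fun i => (Real.sqrt (lam i) : ℂ)) with hDdef
  have hDUt : D * Ut = C := by
    ext i k
    rw [hDdef, Matrix.diagonal_mul]
    by_cases hi : lam i = 0
    · rw [hrow i hi k]
      simp [hi]
    · have hei : e i ∈ s := ⟨i.isLt, hi⟩
      have h3 : v (e i) = w i := by
        show (if h : ((e i : Fin r) : ℕ) < a then w ⟨((e i : Fin r) : ℕ), h⟩ else 0) = w i
        rw [dif_pos i.isLt]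
      have : Ut i k = w i k := by
        show b (e i) k = w i k
        rw [hb (e i) hei, h3]
      rw [this, hwdef]
      simp only [PiLp.toLp_apply]
      have hs : ((Real.sqrt (lam i) : ℂ)) ≠ 0 := by
        have : Real.sqrt (lam i) ≠ 0 := by rw [Real.sqrt_ne_zero (hlam0 _)]; exact hi
        exact_mod_cast this
      field_simp
  set S : Matrix (Fin a) (Fin a) ℂ := A * D * Aᴴ with hSdef
  have hDpsd : D.PosSemidef := Matrix.posSemidef_diagonal_iff.mpr fun i =>
    Complex.zero_le_real.mpr (Real.sqrt_nonneg _)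
  have hSpsd : S.PosSemidef := hDpsd.mul_mul_conjTranspose_same A
  have hSS : S ^ 2 = M * Mᴴ := by
    rw [pow_two, hSdef]
    calc A * D * Aᴴ * (A * D * Aᴴ) = A * D * (Aᴴ * A) * D * Aᴴ := by
          simp only [Matrix.mul_assoc]
      _ = A * (D * D) * Aᴴ := by rw [hA'A]; simp only [Matrix.mul_one, Matrix.mul_assoc]
      _ = A * Matrix.diagonal (fun i => (lam i : ℂ)) * Aᴴ := by
          have hd : (fun i => ((Real.sqrt (lam i) : ℂ)) * ((Real.sqrt (lam i) : ℂ)))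
              = fun i => (lam i : ℂ) := funext fun i => by
            rw [← Complex.ofReal_mul, Real.mul_self_sqrt (hlam0 _)]
          rw [hDdef, Matrix.diagonal_mul_diagonal, hd]
      _ = M * Mᴴ := hspec.symm
  have hSsqrt : S = hP.sqrt := hSpsd.eq_sqrt_of_sq_eq hP hSS
  refine ⟨A * Ut, ?_, ?_⟩
  · rw [Matrix.conjTranspose_mul]
    calc A * Ut * (Utᴴ * Aᴴ) = A * (Ut * Utᴴ) * Aᴴ := by simp only [Matrix.mul_assoc]
      _ = 1 := by rw [hUtUt, Matrix.mul_one, hAA']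
  · rw [← hSsqrt, hSdef]
    calc M = A * (Aᴴ * M) := by rw [← Matrix.mul_assoc, hAA', Matrix.one_mul]
      _ = A * (D * Ut) := by rw [hDUt]
      _ = A * D * Aᴴ * (A * Ut) := by
          rw [Matrix.mul_assoc (A*D), ← Matrix.mul_assoc Aᴴ, hA'A, Matrix.one_mul,
            Matrix.mul_assoc]

lemma psd_trace_nonneg {k : Type*} [Fintype k] [DecidableEq k] {T : Matrix k k ℂ}
    (h : T.PosSemidef) : (0 : ℂ) ≤ T.trace := by
  refine Finset.sum_nonneg fun i _ => ?_
  exact h.diag_nonneg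

/-- Uhlmann's theorem. -/
theorem uhlmann {a r : ℕ} (har : a ≤ r) (ρ σ : Matrix (Fin a) (Fin a) ℂ)
    (hρ : IsDensity ρ) (hσ : IsDensity σ) (ψ : Fin a × Fin r → ℂ)
    (hψnorm : ∑ p, Complex.normSq (ψ p) = 1)
    (hψ : ptraceSnd (Matrix.of fun p q => ψ p * conj (ψ q)) = ρ) :
    ∃ φ : Fin a × Fin r → ℂ,
      (∑ p, Complex.normSq (φ p) = 1) ∧
      ptraceSnd (Matrix.of fun p q => φ p * conj (φ q)) = σ ∧
      ‖∑ p, conj (ψ p) * φ p‖ = fidelity ρ σ := by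
  classical
  set M : Matrix (Fin a) (Fin r) ℂ := Matrix.of fun i k => ψ (i, k) with hMdef
  clear_value M
  have hMM : M * Mᴴ = ρ := by
    ext i j
    have h : ptraceSnd (Matrix.of fun p q => ψ p * conj (ψ q)) i j = ρ i j := by rw [hψ]
    simp only [ptraceSnd, Matrix.of_apply] at h
    simp only [Matrix.mul_apply, Matrix.conjTranspose_apply, hMdef, Matrix.of_apply,
      Complex.star_def]
    exact h
  obtain ⟨U, hU, hMU⟩ := polar_coisometry har M
  have hsqρ : (Matrix.posSemidef_self_mul_conjTranspose M).sqrt = hρ.1.sqrt :=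
    (Matrix.posSemidef_self_mul_conjTranspose M).posSemidef_sqrt.eq_sqrt_of_sq_eq hρ.1
      (by rw [(Matrix.posSemidef_self_mul_conjTranspose M).sq_sqrt, hMM])
  rw [hsqρ] at hMU
  set K : Matrix (Fin a) (Fin a) ℂ := hρ.1.sqrt * hσ.1.sqrt with hKdef
  clear_value K
  obtain ⟨W, hW, hKW⟩ := polar_coisometry (le_refl a) K
  have hKK : K * Kᴴ = hρ.1.sqrt * σ * hρ.1.sqrt := by
    rw [hKdef, Matrix.conjTranspose_mul, hρ.1.posSemidef_sqrt.1.eq, hσ.1.posSemidef_sqrt.1.eq]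
    calc hρ.1.sqrt * hσ.1.sqrt * (hσ.1.sqrt * hρ.1.sqrt)
        = hρ.1.sqrt * (hσ.1.sqrt * hσ.1.sqrt) * hρ.1.sqrt := by simp only [Matrix.mul_assoc]
      _ = hρ.1.sqrt * σ * hρ.1.sqrt := by rw [hσ.1.sqrt_mul_self]
  have hsqK : (Matrix.posSemidef_self_mul_conjTranspose K).sqrt = (fid_aux hρ.1 hσ.1).sqrt :=
    (Matrix.posSemidef_self_mul_conjTranspose K).posSemidef_sqrt.eq_sqrt_of_sq_eq
      (fid_aux hρ.1 hσ.1)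
      (by rw [(Matrix.posSemidef_self_mul_conjTranspose K).sq_sqrt, hKK])
  rw [hsqK] at hKW
  set T : Matrix (Fin a) (Fin a) ℂ := (fid_aux hρ.1 hσ.1).sqrt with hTdef
  clear_value T
  have hW' : Wᴴ * W = 1 := mul_eq_one_comm.mp hW
  set N : Matrix (Fin a) (Fin r) ℂ := hσ.1.sqrt * Wᴴ * U with hNdef
  clear_value N
  have hNH : Nᴴ = Uᴴ * (W * hσ.1.sqrt) := by
    rw [hNdef, Matrix.conjTranspose_mul, Matrix.conjTranspose_mul,
      Matrix.conjTranspose_conjTranspose, hσ.1.posSemidef_sqrt.1.eq]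
  have hNN : N * Nᴴ = σ := by
    rw [hNH, hNdef]
    calc hσ.1.sqrt * Wᴴ * U * (Uᴴ * (W * hσ.1.sqrt))
        = hσ.1.sqrt * Wᴴ * (U * Uᴴ) * (W * hσ.1.sqrt) := by simp only [Matrix.mul_assoc]
      _ = hσ.1.sqrt * (Wᴴ * W) * hσ.1.sqrt := by
          rw [hU, Matrix.mul_one]; simp only [Matrix.mul_assoc]
      _ = σ := by rw [hW', Matrix.mul_one, hσ.1.sqrt_mul_self]
  have hTpos : T.PosSemidef := hTdef ▸ (fid_aux hρ.1 hσ.1).posSemidef_sqrt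
  have htr0 : (0 : ℂ) ≤ T.trace := psd_trace_nonneg hTpos
  obtain ⟨hre, him⟩ := Complex.le_def.mp htr0
  simp only [Complex.zero_re, Complex.zero_im] at hre him
  refine ⟨fun p => N p.1 p.2, ?_, ?_, ?_⟩
  · have h1 : (∑ p : Fin a × Fin r, (Complex.normSq (N p.1 p.2) : ℂ)) = 1 := by
      calc (∑ p : Fin a × Fin r, (Complex.normSq (N p.1 p.2) : ℂ))
          = ∑ i, ∑ k, N i k * (starRingEnd ℂ) (N i k) := by
            rw [Fintype.sum_prod_type]
            exact Finset.sum_congr rfl fun i _ => Finset.sum_congr rfl fun k _ =>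
              (Complex.mul_conj (N i k)).symm
        _ = (N * Nᴴ).trace := by
            simp [Matrix.trace, Matrix.mul_apply, Matrix.conjTranspose_apply]
        _ = 1 := by rw [hNN, hσ.2]
    exact_mod_cast h1
  · ext i j
    show (∑ k, N i k * (starRingEnd ℂ) (N j k)) = σ i j
    rw [← hNN]
    simp [Matrix.mul_apply, Matrix.conjTranspose_apply]
  · have htr : (∑ p : Fin a × Fin r, (starRingEnd ℂ) (ψ p) * N p.1 p.2) = T.trace := by
      calc (∑ p : Fin a × Fin r, (starRingEnd ℂ) (ψ p) * N p.1 p.2)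
          = ∑ i, ∑ k, (starRingEnd ℂ) (M i k) * N i k := by
            rw [Fintype.sum_prod_type]
            simp only [hMdef, Matrix.of_apply]
        _ = (Mᴴ * N).trace := by
            simp only [Matrix.trace, Matrix.diag, Matrix.mul_apply,
              Matrix.conjTranspose_apply]
            exact Finset.sum_comm
        _ = ((K * Wᴴ * U) * Uᴴ).trace := by
            rw [hMU, Matrix.conjTranspose_mul, hρ.1.posSemidef_sqrt.1.eq, hNdef, hKdef]
            rw [show (Uᴴ * hρ.1.sqrt) * (hσ.1.sqrt * Wᴴ * U) =
                Uᴴ * (hρ.1.sqrt * hσ.1.sqrt * Wᴴ * U) from by simp only [Matrix.mul_assoc]]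
            rw [Matrix.trace_mul_comm]
        _ = (K * Wᴴ).trace := by
            rw [Matrix.mul_assoc (K * Wᴴ), hU, Matrix.mul_one]
        _ = T.trace := by
            rw [hKW, Matrix.mul_assoc, hW, Matrix.mul_one]
    rw [htr]
    have hform : T.trace = ((T.trace.re : ℝ) : ℂ) := Complex.ext rfl (by simpa using him.symm)
    have habs : ‖T.trace‖ = T.trace.re := by
      rw [hform, Complex.norm_real]
      simpa using _root_.abs_of_nonneg hre
    rw [habs, hTdef]
    unfold fidelity
    rw [dif_pos ⟨hρ.1, hσ.1⟩]
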